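/- (Welch bound) Let N > M ≥ 1 and let φ_1, ..., φ_N be unit vectors in ℂ^M. Then the coherence satisfies max_{j ≠ l} |⟨φ_j, φ_l⟩| ≥ √((N − M)/(M(N − 1))). -/

import Mathlib

/-!
Let `Φ` be the coordinate matrix of the vectors in an orthonormal basis. The Gram matrix `ΦᴴΦ`
and the frame operator `ΦΦᴴ` have the same Frobenius norm (cyclicity of the trace) and the same
trace `∑ ‖φ_j‖² = N`. Since the frame operator is `M × M`, Cauchy–Schwarz on its diagonal gives
`N² ≤ M · ∑_{j,l} |⟨φ_j, φ_l⟩|²`; the diagonal terms contribute `N`, so the `N(N-1)` off-diagonal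
terms have average at least `(N - M) / (M(N - 1))`.
-/

open Finset Matrix Module
open scoped InnerProductSpace

variable {𝕜 : Type*} [RCLike 𝕜]

namespace Matrix

variable {m n : Type*} [Fintype m] [Fintype n]

theorem sum_sum_norm_sq_eq_re_trace_mul_conjTranspose (A : Matrix m n 𝕜) :
    ∑ i, ∑ j, ‖A i j‖ ^ 2 = RCLike.re (A * Aᴴ).trace := by
  simp only [trace, diag_apply, mul_apply, conjTranspose_apply, RCLike.star_def, RCLike.mul_conj,
    map_sum]
  norm_cast

theorem sum_sum_norm_sq_conjTranspose_mul_self (A : Matrix m n 𝕜) :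
    ∑ i, ∑ j, ‖(Aᴴ * A) i j‖ ^ 2 = ∑ i, ∑ j, ‖(A * Aᴴ) i j‖ ^ 2 := by
  simp only [sum_sum_norm_sq_eq_re_trace_mul_conjTranspose, conjTranspose_mul,
    conjTranspose_conjTranspose]
  rw [Matrix.mul_assoc, trace_mul_comm, Matrix.mul_assoc, Matrix.mul_assoc, Matrix.mul_assoc]

theorem norm_trace_sq_le_card_mul_sum_sum_norm_sq (S : Matrix m m 𝕜) :
    ‖S.trace‖ ^ 2 ≤ Fintype.card m * ∑ i, ∑ j, ‖S i j‖ ^ 2 :=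
  calc ‖S.trace‖ ^ 2 ≤ (∑ i, ‖S i i‖) ^ 2 := by gcongr; exact norm_sum_le _ _
    _ ≤ Fintype.card m * ∑ i, ‖S i i‖ ^ 2 := sq_sum_le_card_mul_sum_sq
    _ ≤ Fintype.card m * ∑ i, ∑ j, ‖S i j‖ ^ 2 := by
      gcongr with i
      exact single_le_sum (f := fun j ↦ ‖S i j‖ ^ 2) (fun _ _ ↦ by positivity) (mem_univ i)

end Matrix

variable {E : Type*} [NormedAddCommGroup E] [InnerProductSpace 𝕜 E] {ι : Type*} [Fintype ι]

variable (𝕜) in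
def framePotential (v : ι → E) : ℝ := ∑ j, ∑ l, ‖⟪v j, v l⟫_𝕜‖ ^ 2

theorem sq_sum_norm_sq_le_finrank_mul_framePotential [FiniteDimensional 𝕜 E] (v : ι → E) :
    (∑ j, ‖v j‖ ^ 2) ^ 2 ≤ finrank 𝕜 E * framePotential 𝕜 v := by
  set Φ : Matrix (Fin (finrank 𝕜 E)) ι 𝕜 := of fun i j ↦ (stdOrthonormalBasis 𝕜 E).repr (v j) i
  have hgram : gram 𝕜 v = Φᴴ * Φ := gram_eq_conjTranspose_mul _ v
  have htrace : ‖(Φ * Φᴴ).trace‖ = ∑ j, ‖v j‖ ^ 2 := by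
    rw [trace_mul_comm, ← hgram]
    simp only [trace, diag_apply, gram_apply, inner_self_eq_norm_sq_to_K]
    norm_cast
    exact abs_of_nonneg (by positivity)
  calc (∑ j, ‖v j‖ ^ 2) ^ 2 = ‖(Φ * Φᴴ).trace‖ ^ 2 := by rw [htrace]
    _ ≤ Fintype.card (Fin (finrank 𝕜 E)) * ∑ i, ∑ j, ‖(Φ * Φᴴ) i j‖ ^ 2 :=
      norm_trace_sq_le_card_mul_sum_sum_norm_sq _
    _ = finrank 𝕜 E * framePotential 𝕜 v := by
      rw [← sum_sum_norm_sq_conjTranspose_mul_self, ← hgram, Fintype.card_fin]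
      rfl

theorem framePotential_eq_card_add_sum_offDiag [DecidableEq ι] {v : ι → E}
    (hv : ∀ j, ‖v j‖ = 1) :
    framePotential 𝕜 v = Fintype.card ι + ∑ p ∈ univ.offDiag, ‖⟪v p.1, v p.2⟫_𝕜‖ ^ 2 := by
  rw [framePotential, ← sum_product', ← diag_union_offDiag, sum_union (disjoint_diag_offDiag _),
    sum_diag]
  simp [hv]

theorem exists_ne_welch_le_norm_inner_sq [FiniteDimensional 𝕜 E] [Nontrivial ι] {v : ι → E}
    (hv : ∀ j, ‖v j‖ = 1) :
    ∃ j l, j ≠ l ∧ ((Fintype.card ι : ℝ) - finrank 𝕜 E) / (finrank 𝕜 E * (Fintype.card ι - 1))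
      ≤ ‖⟪v j, v l⟫_𝕜‖ ^ 2 := by
  classical
  set N : ℝ := (Fintype.card ι : ℝ)
  set d : ℝ := (finrank 𝕜 E : ℝ)
  set off := ∑ p ∈ univ.offDiag, ‖⟪v p.1, v p.2⟫_𝕜‖ ^ 2
  have hN : 1 < N := by simpa [N] using Fintype.one_lt_card (α := ι)
  have hpot : N ^ 2 ≤ d * (N + off) := by
    simpa [hv, framePotential_eq_card_add_sum_offDiag hv] using
      sq_sum_norm_sq_le_finrank_mul_framePotential (𝕜 := 𝕜) v
  obtain ⟨j, l, hjl⟩ := exists_pair_ne ι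
  have hne : (univ.offDiag : Finset (ι × ι)).Nonempty := ⟨(j, l), by simpa using hjl⟩
  have hcard : ((univ.offDiag : Finset (ι × ι)).card : ℝ) = N * (N - 1) := by
    rw [offDiag_card, Nat.cast_sub (Nat.le_mul_self _)]
    simp only [card_univ, Nat.cast_mul, N]; ring
  have hsum : ∑ _p ∈ (univ.offDiag : Finset (ι × ι)), (N - d) / (d * (N - 1)) ≤ off := by
    rw [sum_const, nsmul_eq_mul, hcard]
    have hd : 0 < d := by
      by_contra! hd
      rw [le_antisymm hd (Nat.cast_nonneg _), zero_mul] at hpot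
      nlinarith
    calc N * (N - 1) * ((N - d) / (d * (N - 1))) = N * (N - d) / d := by
          field_simp [(by linarith : N - 1 ≠ 0)]
      _ ≤ off := by rw [div_le_iff₀ hd]; linarith
  obtain ⟨p, hp, hle⟩ := exists_le_of_sum_le hne hsum
  exact ⟨p.1, p.2, (mem_offDiag.1 hp).2.2, hle⟩

theorem welch_bound {M N : ℕ} (hM : 1 ≤ M) (hNM : M < N)
    (φ : Fin N → EuclideanSpace ℂ (Fin M))
    (hunit : ∀ j, ‖φ j‖ = 1) :
    ∃ j l, j ≠ l ∧
      Real.sqrt (((N : ℝ) - M) / (M * ((N : ℝ) - 1))) ≤ ‖(inner ℂ (φ j) (φ l) : ℂ)‖ := by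
  have : Nontrivial (Fin N) := Fin.nontrivial_iff_two_le.2 (hM.trans_lt hNM)
  obtain ⟨j, l, hjl, hle⟩ := exists_ne_welch_le_norm_inner_sq (𝕜 := ℂ) hunit
  refine ⟨j, l, hjl, Real.sqrt_le_left (norm_nonneg _) |>.2 ?_⟩
  simpa using hle
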